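/- For p ∈ (1/2, 1), the function ψ(p) = p·log(p/(2p−1)) + (1−p)·log((2p−1)/(1−p)) attains its maximum value log((1+√5)/2) at p = (5+√5)/10 (equivalently at p = φ/√5 with φ the golden ratio). -/

import Mathlib

open Real

/-- The indicatrice of growth of the Fibonacci language on the direction simplex. -/
noncomputable def psiFib (p : ℝ) : ℝ :=
  p * Real.log (p / (2 * p - 1)) + (1 - p) * Real.log ((2 * p - 1) / (1 - p))

lemma psiFib_hasDerivAt (x : ℝ) (h1 : 1/2 < x) (h2 : x < 1) :
    HasDerivAt psiFib (Real.log x + Real.log (1 - x) - 2 * Real.log (2 * x - 1)) x := by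
  have hx : (0:ℝ) < x := by linarith
  have h2x : (0:ℝ) < 2*x-1 := by linarith
  have h1x : (0:ℝ) < 1-x := by linarith
  have hg : HasDerivAt (fun p : ℝ => p * Real.log p + (1-2*p) * Real.log (2*p-1) - (1-p)*Real.log (1-p))
      (Real.log x + Real.log (1 - x) - 2 * Real.log (2 * x - 1)) x := by
    have d1 : HasDerivAt (fun p : ℝ => p * Real.log p) (Real.log x + 1) x := by
      have := (hasDerivAt_id x).mul (Real.hasDerivAt_log hx.ne')
      exact this.congr_deriv (by simp [hx.ne'])
    have dlog2 : HasDerivAt (fun p : ℝ => Real.log (2*p-1)) (2/(2*x-1)) x := by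
      have h0 : HasDerivAt (fun p : ℝ => 2*p-1) 2 x := by
        simpa using ((hasDerivAt_id x).const_mul 2).sub_const 1
      have := (Real.hasDerivAt_log h2x.ne').comp x h0
      exact this.congr_deriv (by ring)
    have d2 : HasDerivAt (fun p : ℝ => (1-2*p) * Real.log (2*p-1))
        ((-2) * Real.log (2*x-1) + (1-2*x) * (2/(2*x-1))) x := by
      have ha : HasDerivAt (fun p : ℝ => 1-2*p) (-2) x := by
        exact ((hasDerivAt_const x (1:ℝ)).sub ((hasDerivAt_id x).const_mul 2)).congr_deriv (by ring)
      exact ha.mul dlog2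
    have d3 : HasDerivAt (fun p : ℝ => (1-p) * Real.log (1-p))
        ((-1) * Real.log (1-x) + (1-x) * (-(1/(1-x)))) x := by
      have ha : HasDerivAt (fun p : ℝ => 1-p) (-1) x := by
        exact ((hasDerivAt_const x (1:ℝ)).sub (hasDerivAt_id x)).congr_deriv (by ring)
      have dlog3 : HasDerivAt (fun p : ℝ => Real.log (1-p)) (-(1/(1-x))) x := by
        have := (Real.hasDerivAt_log h1x.ne').comp x ha
        exact this.congr_deriv (by ring)
      exact ha.mul dlog3
    have := (d1.add d2).sub d3
    have e1 : (1-2*x)*(2/(2*x-1)) = -2 := by rw [mul_div_assoc', div_eq_iff h2x.ne']; ring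
    have e2 : (1-x)*(-(1/(1-x))) = -1 := by rw [mul_neg, mul_one_div_cancel h1x.ne']
    exact this.congr_deriv (by rw [e1, e2]; ring)
  apply hg.congr_of_eventuallyEq
  have hmem : Set.Ioo (1/2 : ℝ) 1 ∈ nhds x := (isOpen_Ioo).mem_nhds ⟨h1, h2⟩
  filter_upwards [hmem] with y hy
  have hy0 : (0:ℝ) < y := by linarith [hy.1]
  have hy2 : (0:ℝ) < 2*y-1 := by linarith [hy.1]
  have hy1 : (0:ℝ) < 1-y := by linarith [hy.2]
  rw [psiFib, Real.log_div hy0.ne' hy2.ne', Real.log_div hy2.ne' hy1.ne']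
  ring

/-- `ψ_Fib` attains its maximum value `log((1+√5)/2)` (the topological entropy of the
Fibonacci subshift) on `(1/2, 1)` at the point `p = (5+√5)/10`. -/
theorem psiFib_max :
    psiFib ((5 + Real.sqrt 5) / 10) = Real.log ((1 + Real.sqrt 5) / 2) ∧
      ∀ p ∈ Set.Ioo (1 / 2 : ℝ) 1, psiFib p ≤ Real.log ((1 + Real.sqrt 5) / 2) := by
  set s := Real.sqrt 5 with hs_def
  have hs : s^2 = 5 := Real.sq_sqrt (by norm_num)
  have hs0 : (0:ℝ) < s := Real.sqrt_pos.mpr (by norm_num)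
  have hs3 : s < 3 := by nlinarith
  have hs2 : 2 < s := by nlinarith
  set m : ℝ := (5 + s) / 10 with hm_def
  have hm1 : 1/2 < m := by rw [hm_def]; linarith
  have hm2 : m < 1 := by rw [hm_def]; linarith
  have hval : psiFib m = Real.log ((1 + s) / 2) := by
    have e1 : m / (2 * m - 1) = (1 + s) / 2 := by
      rw [hm_def]; rw [div_eq_div_iff (by linarith) (by norm_num)]; nlinarith
    have e2 : (2 * m - 1) / (1 - m) = (1 + s) / 2 := by
      rw [hm_def]; rw [div_eq_div_iff (by linarith) (by norm_num)]; nlinarith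
    rw [psiFib, e1, e2]; ring
  refine ⟨hval, fun p hp => ?_⟩
  obtain ⟨hp1, hp2⟩ := hp
  rw [← hval]
  have hcont : ContinuousOn psiFib (Set.Ioo (1/2 : ℝ) 1) := fun x hx =>
    ((psiFib_hasDerivAt x hx.1 hx.2).continuousAt).continuousWithinAt
  rcases le_or_gt p m with hpm | hpm
  · rcases eq_or_lt_of_le hpm with h | h
    · rw [h]
    · have hmono : StrictMonoOn psiFib (Set.Icc p m) := by
        apply strictMonoOn_of_deriv_pos (convex_Icc p m)
          (hcont.mono (fun x hx => ⟨lt_of_lt_of_le hp1 hx.1, lt_of_le_of_lt hx.2 hm2⟩))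
        intro x hx
        rw [interior_Icc] at hx
        have hx1 : 1/2 < x := lt_trans hp1 hx.1
        have hx2 : x < 1 := lt_trans hx.2 hm2
        rw [(psiFib_hasDerivAt x hx1 hx2).deriv]
        have h2x : (0:ℝ) < 2*x-1 := by linarith
        have hxm : x < m := hx.2
        have key : (2*x-1)^2 < x * (1-x) := by
          have ha : 0 < m - x := by linarith
          have hb : 0 < x - (5 - s)/10 := by rw [hm_def] at *; nlinarith
          nlinarith [mul_pos ha hb]
        have hlog : Real.log ((2*x-1)^2) < Real.log (x * (1-x)) :=
          Real.log_lt_log (by positivity) key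
        rw [Real.log_pow] at hlog
        rw [Real.log_mul (by linarith : x ≠ 0) (by linarith : (1:ℝ)-x ≠ 0)] at hlog
        push_cast at hlog
        linarith
      exact (hmono ⟨le_refl p, le_of_lt h⟩ ⟨le_of_lt h, le_refl m⟩ h).le
  · have hanti : StrictAntiOn psiFib (Set.Icc m p) := by
      apply strictAntiOn_of_deriv_neg (convex_Icc m p)
        (hcont.mono (fun x hx => ⟨lt_of_lt_of_le hm1 hx.1, lt_of_le_of_lt hx.2 hp2⟩))
      intro x hx
      rw [interior_Icc] at hx
      have hx1 : 1/2 < x := lt_trans hm1 hx.1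
      have hx2 : x < 1 := lt_trans hx.2 hp2
      rw [(psiFib_hasDerivAt x hx1 hx2).deriv]
      have h2x : (0:ℝ) < 2*x-1 := by linarith
      have key : x * (1-x) < (2*x-1)^2 := by
        have ha : 0 < x - m := by linarith [hx.1]
        have hb : 0 < x - (5 - s)/10 := by rw [hm_def] at *; nlinarith
        nlinarith [mul_pos ha hb]
      have hlog : Real.log (x * (1-x)) < Real.log ((2*x-1)^2) :=
        Real.log_lt_log (by nlinarith) key
      rw [Real.log_pow] at hlog
      rw [Real.log_mul (by linarith : x ≠ 0) (by linarith : (1:ℝ)-x ≠ 0)] at hlog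
      push_cast at hlog
      linarith
    exact (hanti ⟨le_refl m, hpm.le⟩ ⟨hpm.le, le_refl p⟩ hpm).le
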